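/- arXiv:2207.09620 — 4 statements merged into one kernel-verified Lean document; each statement's English description precedes it below -/
import Mathlib

section
/- The image of ℤ[1/p] under the map x ↦ (-x, x) is a discrete subgroup of ℚ_p × ℝ. -/
private lemma key_zero (p : ℕ) [Fact p.Prime] :
    ∀ (n : ℕ) (a : ℤ), padicNorm p ((a : ℚ) / (p : ℚ) ^ n) < 1 →
      |(a : ℚ) / (p : ℚ) ^ n| < 1 → (a : ℚ) / (p : ℚ) ^ n = 0 := by
  have hp : (p : ℚ) ≠ 0 := by
    exact_mod_cast (Fact.out : p.Prime).ne_zero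
  intro n
  induction n with
  | zero =>
    intro a _ h2
    simp only [pow_zero, div_one] at h2 ⊢
    have ha : |a| < 1 := by exact_mod_cast h2
    have : a = 0 := by
      rcases abs_cases a with ⟨h,_⟩|⟨h,_⟩ <;> omega
    simp [this]
  | succ n ih =>
    intro a h1 h2
    have hnorm_a : padicNorm p (a : ℚ) < 1 := by
      have heq : (a : ℚ) = ((a : ℚ) / (p : ℚ) ^ (n + 1)) * (p : ℚ) ^ (n + 1) := by
        field_simp
      have hppow : padicNorm p ((p : ℚ) ^ (n + 1)) ≤ 1 := by
        calc padicNorm p ((p : ℚ) ^ (n + 1)) = (padicNorm p (p : ℚ)) ^ (n + 1) := by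
              induction (n+1) with
              | zero => simp [padicNorm.one]
              | succ k ihk => rw [pow_succ, pow_succ, padicNorm.mul, ihk]
          _ ≤ 1 ^ (n + 1) := by
              apply pow_le_pow_left₀ (padicNorm.nonneg _)
              rw [padicNorm.padicNorm_p_of_prime]
              exact inv_le_one_of_one_le₀ (by exact_mod_cast (Fact.out : p.Prime).one_le)
          _ = 1 := one_pow _
      calc padicNorm p (a : ℚ)
          = padicNorm p ((a : ℚ) / (p : ℚ) ^ (n + 1)) * padicNorm p ((p : ℚ) ^ (n + 1)) := by
            rw [← padicNorm.mul, ← heq]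
        _ ≤ padicNorm p ((a : ℚ) / (p : ℚ) ^ (n + 1)) * 1 :=
            mul_le_mul_of_nonneg_left hppow (padicNorm.nonneg _)
        _ = padicNorm p ((a : ℚ) / (p : ℚ) ^ (n + 1)) := mul_one _
        _ < 1 := h1
    obtain ⟨b, rfl⟩ := (padicNorm.int_lt_one_iff a).mp hnorm_a
    have hx : ((((p : ℤ) * b : ℤ) : ℚ)) / (p : ℚ) ^ (n + 1) = (b : ℚ) / (p : ℚ) ^ n := by
      push_cast
      field_simp
      ring
    rw [hx] at h1 h2 ⊢
    exact ih b h1 h2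

/-- The image of `ℤ[1/p]` under the map `x ↦ (-x, x)` is a discrete subgroup of
`ℚ_p × ℝ`. -/
theorem zInvP_image_discrete_subgroup (p : ℕ) [Fact p.Prime] :
    ∃ S : AddSubgroup (ℚ_[p] × ℝ),
      (S : Set (ℚ_[p] × ℝ)) =
        {y | ∃ x : ℚ, (∃ a : ℤ, ∃ n : ℕ, x = (a : ℚ) / (p : ℚ) ^ n) ∧
          y = (-(x : ℚ_[p]), (x : ℝ))} ∧
      DiscreteTopology S := by
  have hp : (p : ℚ) ≠ 0 := by exact_mod_cast (Fact.out : p.Prime).ne_zero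
  -- the subgroup ℤ[1/p] of ℚ
  set D : AddSubgroup ℚ :=
    { carrier := {x : ℚ | ∃ a : ℤ, ∃ n : ℕ, x = (a : ℚ) / (p : ℚ) ^ n}
      zero_mem' := ⟨0, 0, by simp⟩
      add_mem' := by
        rintro x y ⟨a, n, rfl⟩ ⟨b, m, rfl⟩
        refine ⟨a * p ^ m + b * p ^ n, n + m, ?_⟩
        have h1 : ((p : ℚ)) ^ n ≠ 0 := pow_ne_zero _ hp
        have h2 : ((p : ℚ)) ^ m ≠ 0 := pow_ne_zero _ hp
        push_cast
        rw [div_add_div _ _ h1 h2, pow_add]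
        congr 1
        ring
      neg_mem' := by
        rintro x ⟨a, n, rfl⟩
        exact ⟨-a, n, by push_cast; ring⟩ } with hD
  -- the homomorphism x ↦ (-x, x)
  set f : ℚ →+ ℚ_[p] × ℝ :=
    { toFun := fun x => (-(x : ℚ_[p]), (x : ℝ))
      map_zero' := by simp
      map_add' := by
        intro x y
        simp only [Prod.mk_add_mk, Prod.mk.injEq]
        constructor <;> (push_cast; ring) } with hf
  refine ⟨D.map f, ?_, ?_⟩
  · ext y
    simp only [AddSubgroup.coe_map, Set.mem_image, SetLike.mem_coe, Set.mem_setOf_eq]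
    constructor
    · rintro ⟨x, hx, rfl⟩
      exact ⟨x, hx, rfl⟩
    · rintro ⟨x, hx, rfl⟩
      exact ⟨x, hx, rfl⟩
  · -- discreteness
    rw [discreteTopology_iff_isOpen_singleton_zero]
    have hU : IsOpen {y : ℚ_[p] × ℝ | ‖y.1‖ < 1 ∧ |y.2| < 1} := by
      apply IsOpen.inter
      · exact isOpen_lt (continuous_norm.comp continuous_fst) continuous_const
      · exact isOpen_lt (continuous_abs.comp continuous_snd) continuous_const
    have : ({0} : Set (D.map f)) =
        Subtype.val ⁻¹' {y : ℚ_[p] × ℝ | ‖y.1‖ < 1 ∧ |y.2| < 1} := by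
      ext ⟨y, hy⟩
      simp only [Set.mem_singleton_iff, Set.mem_preimage, Set.mem_setOf_eq]
      constructor
      · intro h
        have hy0 : y = 0 := congrArg Subtype.val h
        simp [hy0]
      · rintro ⟨h1, h2⟩
        obtain ⟨x, hxD, rfl⟩ := hy
        obtain ⟨a, n, rfl⟩ := hxD
        have hx0 : (a : ℚ) / (p : ℚ) ^ n = 0 := by
          apply key_zero p n a
          · have : ‖(((a : ℚ) / (p : ℚ) ^ n : ℚ) : ℚ_[p])‖ < 1 := by
              simpa [hf] using h1
            rw [Padic.eq_padicNorm] at this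
            exact_mod_cast this
          · have : |(((a : ℚ) / (p : ℚ) ^ n : ℚ) : ℝ)| < 1 := by
              simpa [hf] using h2
            rw [← Rat.cast_abs] at this
            exact_mod_cast this
        apply Subtype.ext
        show ((-(((a : ℚ) / (p : ℚ) ^ n : ℚ) : ℚ_[p]), (((a : ℚ) / (p : ℚ) ^ n : ℚ) : ℝ)) : ℚ_[p] × ℝ) = 0
        rw [hx0]
        simp
    rw [this]
    exact hU.preimage continuous_subtype_val
end

section
/- The pushforward under the homeomorphism π_Y: {0,1,…,p-1}^ℕ → ℤ_p, (t₀,t₁,…) ↦ Σ t_i p^i, of the product of uniform probability measures on {0,…,p-1} equals the normalized Haar measure on ℤ_p. -/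
open MeasureTheory Finset

namespace DigitsHaarAux

variable {p : ℕ} [hp : Fact p.Prime]

lemma summable_digits (t : ℕ → Fin p) :
    Summable (fun i : ℕ => ((t i : ℕ) : ℤ_[p]) * (p : ℤ_[p]) ^ i) := by
  refine Summable.of_norm_bounded (g := fun i => ((p : ℝ)⁻¹) ^ i) ?_ ?_
  · exact summable_geometric_of_lt_one (by positivity)
      (inv_lt_one_of_one_lt₀ (by exact_mod_cast hp.out.one_lt))
  · intro i
    rw [norm_mul, PadicInt.norm_p_pow]
    calc ‖((t i : ℕ) : ℤ_[p])‖ * (p : ℝ) ^ (-i : ℤ)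
        ≤ 1 * (p : ℝ) ^ (-i : ℤ) := by
          have := PadicInt.norm_le_one ((t i : ℕ) : ℤ_[p])
          have h0 : (0:ℝ) ≤ (p : ℝ) ^ (-i : ℤ) := by positivity
          nlinarith [norm_nonneg ((t i : ℕ) : ℤ_[p])]
      _ = ((p : ℝ)⁻¹) ^ i := by
          rw [one_mul, zpow_neg, zpow_natCast, inv_pow]

lemma sum_digits_mod (m n : ℕ) :
    ∑ i ∈ range n, m / p ^ i % p * p ^ i = m % p ^ n := by
  induction n with
  | zero => simp [Nat.mod_one]
  | succ n ih =>
    rw [sum_range_succ, ih]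
    have h1 : m % p ^ (n + 1) % p ^ n = m % p ^ n :=
      Nat.mod_mod_of_dvd _ (pow_dvd_pow p n.le_succ)
    have h2 : m % p ^ (n + 1) / p ^ n = m / p ^ n % p := by
      rw [pow_succ]; exact Nat.mod_mul_right_div_self m (p ^ n) p
    have h3 := Nat.div_add_mod (m % p ^ (n + 1)) (p ^ n)
    rw [h1, h2] at h3
    rw [← h3]; ring


/-- The `i`-th base-`p` digit of `m`. -/
def digit (m i : ℕ) : Fin p := ⟨m / p ^ i % p, Nat.mod_lt _ hp.out.pos⟩

/-- The digit-sum map into `ZMod (p ^ n)`. -/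
def F (n : ℕ) (b : Fin n → Fin p) : ZMod (p ^ n) :=
  ((∑ i : Fin n, (b i : ℕ) * p ^ (i : ℕ) : ℕ) : ZMod (p ^ n))

lemma F_digit (n : ℕ) (c : ZMod (p ^ n)) :
    haveI : NeZero (p ^ n) := ⟨pow_ne_zero _ hp.out.pos.ne'⟩
    F n (fun i => digit c.val (i : ℕ)) = c := by
  haveI : NeZero (p ^ n) := ⟨pow_ne_zero _ hp.out.pos.ne'⟩
  have h1 : (∑ i : Fin n, (digit (p := p) c.val (i : ℕ) : ℕ) * p ^ (i : ℕ))
      = ∑ i ∈ range n, c.val / p ^ i % p * p ^ i := by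
    rw [Finset.sum_range fun i => c.val / p ^ i % p * p ^ i]
    rfl
  rw [F, h1, sum_digits_mod, Nat.mod_eq_of_lt (ZMod.val_lt c), ZMod.natCast_zmod_val]

lemma F_bijective (n : ℕ) : Function.Bijective (F (p := p) n) := by
  haveI : NeZero (p ^ n) := ⟨pow_ne_zero _ hp.out.pos.ne'⟩
  rw [Fintype.bijective_iff_surjective_and_card]
  constructor
  · intro c
    exact ⟨_, F_digit n c⟩
  · simp [ZMod.card]


lemma toZModPow_tsum (t : ℕ → Fin p) (n : ℕ) :
    PadicInt.toZModPow n (∑' i : ℕ, ((t i : ℕ) : ℤ_[p]) * (p : ℤ_[p]) ^ i)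
      = ((∑ i ∈ range n, (t i : ℕ) * p ^ i : ℕ) : ZMod (p ^ n)) := by
  have hs := summable_digits t
  have hsplit := hs.sum_add_tsum_nat_add n
  rw [← hsplit]
  have htail : (∑' i : ℕ, ((t (i + n) : ℕ) : ℤ_[p]) * (p : ℤ_[p]) ^ (i + n))
      = (∑' i : ℕ, ((t (i + n) : ℕ) : ℤ_[p]) * (p : ℤ_[p]) ^ i) * (p : ℤ_[p]) ^ n := by
    have : ∀ i : ℕ, ((t (i + n) : ℕ) : ℤ_[p]) * (p : ℤ_[p]) ^ (i + n)
        = (((t (i + n) : ℕ) : ℤ_[p]) * (p : ℤ_[p]) ^ i) * (p : ℤ_[p]) ^ n := by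
      intro i; rw [pow_add]; ring
    simp_rw [this]
    exact (summable_digits (fun i => t (i + n))).tsum_mul_right _
  rw [htail, map_add, map_mul]
  have hker : (PadicInt.toZModPow n) ((p : ℤ_[p]) ^ n) = 0 := by
    have : ((p : ℤ_[p]) ^ n) ∈ RingHom.ker (PadicInt.toZModPow (p := p) n) := by
      rw [PadicInt.ker_toZModPow]
      exact Ideal.mem_span_singleton.mpr dvd_rfl
    exact this
  rw [hker, mul_zero, add_zero]
  have hcast : (∑ i ∈ range n, ((t i : ℕ) : ℤ_[p]) * (p : ℤ_[p]) ^ i)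
      = ((∑ i ∈ range n, (t i : ℕ) * p ^ i : ℕ) : ℤ_[p]) := by
    push_cast
    rfl
  rw [hcast, map_natCast]

lemma preimage_ball (n : ℕ) (c : ZMod (p ^ n)) :
    (fun t : ℕ → Fin p => ∑' i : ℕ, ((t i : ℕ) : ℤ_[p]) * (p : ℤ_[p]) ^ i) ⁻¹'
        ((PadicInt.toZModPow n) ⁻¹' {c})
      = {t : ℕ → Fin p | ∀ i ∈ range n, t i = digit c.val i} := by
  ext t
  simp only [Set.mem_preimage, Set.mem_singleton_iff, Set.mem_setOf_eq, toZModPow_tsum]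
  have hF : ((∑ i ∈ range n, (t i : ℕ) * p ^ i : ℕ) : ZMod (p ^ n))
      = F n (fun i : Fin n => t (i : ℕ)) := by
    rw [F, Finset.sum_range fun i => (t i : ℕ) * p ^ i]
  constructor
  · intro h i hi
    have : F n (fun i : Fin n => t (i : ℕ)) = F n (fun i : Fin n => digit c.val (i : ℕ)) := by
      rw [← hF, h, F_digit]
    have := (F_bijective n).injective this
    exact congrFun this ⟨i, mem_range.mp hi⟩
  · intro h
    rw [hF]
    have : (fun i : Fin n => t (i : ℕ)) = fun i : Fin n => digit c.val (i : ℕ) := by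
      funext i; exact h i (mem_range.mpr i.isLt)
    rw [this, F_digit]


lemma ball_eq_closedBall {n : ℕ} {c : ZMod (p ^ n)} {x : ℤ_[p]}
    (hx : PadicInt.toZModPow n x = c) :
    (PadicInt.toZModPow n) ⁻¹' {c} = Metric.closedBall x ((p : ℝ) ^ (-n : ℤ)) := by
  ext y
  rw [Set.mem_preimage, Set.mem_singleton_iff, Metric.mem_closedBall, dist_eq_norm,
    PadicInt.norm_le_pow_iff_mem_span_pow, ← PadicInt.ker_toZModPow, RingHom.mem_ker,
    map_sub, hx, sub_eq_zero]

lemma isOpen_ball (n : ℕ) (c : ZMod (p ^ n)) :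
    IsOpen ((PadicInt.toZModPow (p := p) n) ⁻¹' {c}) := by
  rcases Set.eq_empty_or_nonempty ((PadicInt.toZModPow (p := p) n) ⁻¹' {c}) with h | ⟨x, hx⟩
  · rw [h]; exact isOpen_empty
  · rw [ball_eq_closedBall hx]
    have hp0 : (0:ℝ) < (p : ℝ) ^ (-n : ℤ) := by
      have : (0:ℝ) < p := by exact_mod_cast hp.out.pos
      positivity
    exact IsUltrametricDist.isOpen_closedBall x hp0.ne'

lemma isBasis_balls :
    TopologicalSpace.IsTopologicalBasis
      {s : Set ℤ_[p] | ∃ (n : ℕ) (c : ZMod (p ^ n)), s = (PadicInt.toZModPow n) ⁻¹' {c}} := by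
  apply TopologicalSpace.isTopologicalBasis_of_isOpen_of_nhds
  · rintro s ⟨n, c, rfl⟩
    exact isOpen_ball n c
  · intro x u hxu hu
    obtain ⟨ε, hε, hball⟩ := Metric.isOpen_iff.mp hu x hxu
    have hp1 : (p : ℝ)⁻¹ < 1 := inv_lt_one_of_one_lt₀ (by exact_mod_cast hp.out.one_lt)
    obtain ⟨n, hn⟩ := exists_pow_lt_of_lt_one hε hp1
    refine ⟨(PadicInt.toZModPow n) ⁻¹' {PadicInt.toZModPow n x},
      ⟨n, _, rfl⟩, rfl, ?_⟩
    rw [ball_eq_closedBall rfl]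
    refine subset_trans ?_ hball
    intro y hy
    rw [Metric.mem_closedBall] at hy
    rw [Metric.mem_ball]
    calc dist y x ≤ (p : ℝ) ^ (-n : ℤ) := hy
      _ = ((p : ℝ)⁻¹) ^ n := by rw [zpow_neg, zpow_natCast, inv_pow]
      _ < ε := hn


lemma measurable_piY [MeasurableSpace ℤ_[p]] [BorelSpace ℤ_[p]] :
    Measurable (fun t : ℕ → Fin p => ∑' i : ℕ, ((t i : ℕ) : ℤ_[p]) * (p : ℤ_[p]) ^ i) := by
  have hcont : ∀ n : ℕ, Continuous
      (fun t : ℕ → Fin p => ∑ i ∈ range n, ((t i : ℕ) : ℤ_[p]) * (p : ℤ_[p]) ^ i) := by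
    intro n
    apply continuous_finset_sum
    intro i _
    exact ((continuous_of_discreteTopology (α := Fin p)
      (f := fun x : Fin p => ((x : ℕ) : ℤ_[p]))).comp (continuous_apply i)).mul continuous_const
  apply measurable_of_tendsto_metrizable (fun n => (hcont n).measurable)
  rw [tendsto_pi_nhds]
  intro t
  exact (summable_digits t).hasSum.tendsto_sum_nat

lemma haar_ball [MeasurableSpace ℤ_[p]] [BorelSpace ℤ_[p]]
    (μ : Measure ℤ_[p]) [μ.IsAddHaarMeasure] [IsProbabilityMeasure μ]
    (n : ℕ) (c : ZMod (p ^ n)) :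
    μ ((PadicInt.toZModPow n) ⁻¹' {c}) = ((p : ENNReal))⁻¹ ^ n := by
  haveI : NeZero (p ^ n) := ⟨pow_ne_zero _ hp.out.pos.ne'⟩
  set B : ZMod (p ^ n) → Set ℤ_[p] := fun c => (PadicInt.toZModPow n) ⁻¹' {c} with hB
  have hmeas : ∀ c, MeasurableSet (B c) := fun c => (isOpen_ball n c).measurableSet
  have htrans : ∀ c, μ (B c) = μ (B 0) := by
    intro c
    have hx : PadicInt.toZModPow n ((c.val : ℤ_[p])) = c := by
      rw [map_natCast, ZMod.natCast_zmod_val]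
    have hpre : (((c.val : ℤ_[p])) + ·) ⁻¹' (B c) = B 0 := by
      ext y
      simp only [hB, Set.mem_preimage, Set.mem_singleton_iff, map_add, hx]
      exact ⟨fun h => by rwa [add_eq_left] at h, fun h => by rw [h, add_zero]⟩
    rw [← measure_preimage_add μ ((c.val : ℤ_[p])) (B c), hpre]
  have hUnion : (⋃ c, B c) = Set.univ := by
    ext y
    simp only [Set.mem_iUnion, Set.mem_univ, iff_true]
    exact ⟨PadicInt.toZModPow n y, rfl⟩
  have hdisj : Pairwise (Function.onFun Disjoint B) := by
    intro c d hcd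
    rw [Function.onFun, Set.disjoint_left]
    rintro y hc hd
    exact hcd (by rw [← hc, ← hd])
  have hsum : (1 : ENNReal) = ∑' c : ZMod (p ^ n), μ (B c) := by
    rw [← measure_iUnion hdisj hmeas, hUnion, measure_univ]
  have hcard : (1 : ENNReal) = (p : ENNReal) ^ n * μ (B 0) := by
    rw [hsum]
    simp_rw [fun c => htrans c]
    rw [tsum_fintype, Finset.sum_const, Finset.card_univ, ZMod.card]
    simp [nsmul_eq_mul, Nat.cast_pow]
  have hpn0 : ((p : ENNReal)) ^ n ≠ 0 := pow_ne_zero _ (by simp [hp.out.pos.ne'])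
  have hpnt : ((p : ENNReal)) ^ n ≠ ⊤ := ENNReal.pow_ne_top (by simp)
  have hB0 : μ (B 0) = ((p : ENNReal) ^ n)⁻¹ := by
    calc μ (B 0) = ((p : ENNReal) ^ n)⁻¹ * ((p : ENNReal) ^ n * μ (B 0)) := by
          rw [← mul_assoc, ENNReal.inv_mul_cancel hpn0 hpnt, one_mul]
      _ = ((p : ENNReal) ^ n)⁻¹ := by rw [← hcard, mul_one]
  rw [htrans c, hB0, ENNReal.inv_pow]


lemma ball_subset_ball {n m : ℕ} (h : n ≤ m) (c : ZMod (p ^ n)) (d : ZMod (p ^ m))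
    (x : ℤ_[p]) (hx1 : PadicInt.toZModPow n x = c) (hx2 : PadicInt.toZModPow m x = d) :
    (PadicInt.toZModPow m) ⁻¹' {d} ⊆ (PadicInt.toZModPow (p := p) n) ⁻¹' {c} := by
  intro y hy
  rw [Set.mem_preimage, Set.mem_singleton_iff] at hy ⊢
  rw [← PadicInt.cast_toZModPow n m h y, hy, ← hx2,
    PadicInt.cast_toZModPow n m h x, hx1]

lemma isPiSystem_balls :
    IsPiSystem {s : Set ℤ_[p] |
      ∃ (n : ℕ) (c : ZMod (p ^ n)), s = (PadicInt.toZModPow n) ⁻¹' {c}} := by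
  rintro s ⟨n, c, rfl⟩ t ⟨m, d, rfl⟩ ⟨x, hx1, hx2⟩
  rw [Set.mem_preimage, Set.mem_singleton_iff] at hx1 hx2
  rcases le_total n m with h | h
  · rw [Set.inter_eq_self_of_subset_right (ball_subset_ball h c d x hx1 hx2)]
    exact ⟨m, d, rfl⟩
  · rw [Set.inter_eq_self_of_subset_left (ball_subset_ball h d c x hx2 hx1)]
    exact ⟨n, c, rfl⟩

end DigitsHaarAux

open DigitsHaarAux in
/-- The pushforward under `π_Y : {0,…,p-1}^ℕ → ℤ_p`, `(t₀,t₁,…) ↦ Σ tᵢ pⁱ`, of the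
Bernoulli product measure with uniform weights `(1/p,…,1/p)` (characterized by its
values `p^{-|I|}` on cylinder sets) is the normalized Haar measure on `ℤ_p`. -/
theorem digits_pushforward_haar (p : ℕ) [Fact p.Prime]
    [MeasurableSpace ℤ_[p]] [BorelSpace ℤ_[p]]
    (ν : Measure (ℕ → Fin p))
    (hν : ∀ (I : Finset ℕ) (b : ℕ → Fin p),
      ν {x : ℕ → Fin p | ∀ i ∈ I, x i = b i} = ((p : ENNReal))⁻¹ ^ I.card)
    (μ : Measure ℤ_[p]) [μ.IsAddHaarMeasure] [IsProbabilityMeasure μ] :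
    Measure.map (fun t : ℕ → Fin p => ∑' i : ℕ, ((t i : ℕ) : ℤ_[p]) * (p : ℤ_[p]) ^ i)
      ν = μ := by
  haveI : IsProbabilityMeasure ν := ⟨by simpa using hν ∅ 0⟩
  have hπ := measurable_piY (p := p)
  haveI : IsProbabilityMeasure (Measure.map
      (fun t : ℕ → Fin p => ∑' i : ℕ, ((t i : ℕ) : ℤ_[p]) * (p : ℤ_[p]) ^ i) ν) :=
    Measure.isProbabilityMeasure_map hπ.aemeasurable
  refine ext_of_generate_finite
    {s : Set ℤ_[p] | ∃ (n : ℕ) (c : ZMod (p ^ n)), s = (PadicInt.toZModPow n) ⁻¹' {c}}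
    ?_ isPiSystem_balls ?_ ?_
  · rw [BorelSpace.measurable_eq (α := ℤ_[p]),
      (isBasis_balls (p := p)).borel_eq_generateFrom]
  · rintro s ⟨n, c, rfl⟩
    rw [Measure.map_apply hπ (isOpen_ball n c).measurableSet, preimage_ball,
      haar_ball μ n c]
    have := hν (Finset.range n) (fun i => digit c.val i)
    rw [this, Finset.card_range]
  · simp
end

section
/- Let 𝔠 be the collection consisting of: the open intervals (a/pⁿ, (a+1)/pⁿ) for n ≥ 0 and 0 ≤ a < pⁿ with gcd(a,p) = 1; the singletons {a/pⁿ} for n ≥ 0 and 0 ≤ a ≤ pⁿ; and the empty set. Then 𝔠 is closed under pairwise intersection (it is a π-system of subsets of [0,1]). -/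
open Set

/-- The collection `𝔠` of subsets of `[0,1]`: open intervals `(a/pⁿ, (a+1)/pⁿ)` with
`0 ≤ a < pⁿ` and `gcd(a,p) = 1`, singletons `{a/pⁿ}` with `0 ≤ a ≤ pⁿ`, and the
empty set. -/
def padicIntervalSystem (p : ℕ) : Set (Set ℝ) :=
  {S | (∃ n a : ℕ, a < p ^ n ∧ Nat.gcd a p = 1 ∧
          S = Set.Ioo ((a : ℝ) / (p : ℝ) ^ n) (((a : ℝ) + 1) / (p : ℝ) ^ n)) ∨
       (∃ n a : ℕ, a ≤ p ^ n ∧ S = {(a : ℝ) / (p : ℝ) ^ n}) ∨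
       S = ∅}

lemma padic_div_shift (p : ℝ) (hp : 0 < p) (x : ℝ) (n k : ℕ) :
    x / p ^ n = x * p ^ k / p ^ (n + k) := by
  rw [pow_add]
  field_simp

lemma padic_ioo_inter (p : ℕ) (hp : 1 < p) (n m a b : ℕ) (hn : n ≤ m) :
    Ioo ((a : ℝ) / (p : ℝ) ^ n) (((a : ℝ) + 1) / (p : ℝ) ^ n) ∩
        Ioo ((b : ℝ) / (p : ℝ) ^ m) (((b : ℝ) + 1) / (p : ℝ) ^ m)
      = Ioo ((b : ℝ) / (p : ℝ) ^ m) (((b : ℝ) + 1) / (p : ℝ) ^ m) ∨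
    Ioo ((a : ℝ) / (p : ℝ) ^ n) (((a : ℝ) + 1) / (p : ℝ) ^ n) ∩
        Ioo ((b : ℝ) / (p : ℝ) ^ m) (((b : ℝ) + 1) / (p : ℝ) ^ m) = ∅ := by
  have hp0 : (0 : ℝ) < (p : ℝ) := by exact_mod_cast Nat.lt_of_lt_of_le Nat.zero_lt_one hp.le
  have hpm : (0 : ℝ) < (p : ℝ) ^ m := pow_pos hp0 m
  set k := m - n with hk
  have hm : m = n + k := by omega
  have h1 : (a : ℝ) / (p : ℝ) ^ n = ((a * p ^ k : ℕ) : ℝ) / (p : ℝ) ^ m := by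
    rw [hm]; push_cast; exact padic_div_shift _ hp0 _ n k
  have h2 : ((a : ℝ) + 1) / (p : ℝ) ^ n = (((a + 1) * p ^ k : ℕ) : ℝ) / (p : ℝ) ^ m := by
    rw [hm]; push_cast; exact padic_div_shift _ hp0 _ n k
  have hpk : 0 < p ^ k := Nat.pow_pos (by omega)
  rcases lt_or_ge b (a * p ^ k) with hb1 | hb1
  · right
    have : ((b : ℝ) + 1) / (p : ℝ) ^ m ≤ (a : ℝ) / (p : ℝ) ^ n := by
      rw [h1, div_le_div_iff_of_pos_right hpm]
      have : b + 1 ≤ a * p ^ k := hb1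
      exact_mod_cast this
    apply eq_empty_iff_forall_notMem.mpr
    rintro x ⟨⟨hx1, _⟩, ⟨_, hx4⟩⟩
    linarith
  · rcases lt_or_ge b ((a + 1) * p ^ k) with hb2 | hb2
    · left
      apply inter_eq_right.mpr
      apply Ioo_subset_Ioo
      · rw [h1, div_le_div_iff_of_pos_right hpm]; exact_mod_cast hb1
      · rw [h2, div_le_div_iff_of_pos_right hpm]
        have : b + 1 ≤ (a + 1) * p ^ k := hb2
        exact_mod_cast this
    · right
      have : ((a : ℝ) + 1) / (p : ℝ) ^ n ≤ (b : ℝ) / (p : ℝ) ^ m := by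
        rw [h2, div_le_div_iff_of_pos_right hpm]; exact_mod_cast hb2
      apply eq_empty_iff_forall_notMem.mpr
      rintro x ⟨⟨_, hx2⟩, ⟨hx3, _⟩⟩
      linarith

lemma padic_empty_mem (p : ℕ) : (∅ : Set ℝ) ∈ padicIntervalSystem p := by
  right; right; rfl

/-- The collection `𝔠` is closed under pairwise intersection: it is a π-system. -/
theorem padicIntervalSystem_isPiSystem (p : ℕ) [Fact p.Prime] :
    ∀ s ∈ padicIntervalSystem p, ∀ t ∈ padicIntervalSystem p,
      s ∩ t ∈ padicIntervalSystem p := by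
  have hp : 1 < p := (Fact.out : p.Prime).one_lt
  rintro s hs t ht
  rcases ht with ⟨m, b, hb, hgb, rfl⟩ | ⟨m, b, hb, rfl⟩ | rfl
  · -- t is an interval
    rcases hs with ⟨n, a, ha, hga, rfl⟩ | ⟨n, a, ha, rfl⟩ | rfl
    · -- interval ∩ interval
      rcases le_total n m with hnm | hnm
      · rcases padic_ioo_inter p hp n m a b hnm with h | h
        · rw [h]; exact Or.inl ⟨m, b, hb, hgb, rfl⟩
        · rw [h]; exact padic_empty_mem p
      · rcases padic_ioo_inter p hp m n b a hnm with h | h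
        · rw [inter_comm, h]; exact Or.inl ⟨n, a, ha, hga, rfl⟩
        · rw [inter_comm, h]; exact padic_empty_mem p
    · -- singleton ∩ interval
      by_cases hx : ((a : ℝ) / (p : ℝ) ^ n) ∈
          Ioo ((b : ℝ) / (p : ℝ) ^ m) (((b : ℝ) + 1) / (p : ℝ) ^ m)
      · rw [inter_eq_left.mpr (singleton_subset_iff.mpr hx)]
        exact Or.inr (Or.inl ⟨n, a, ha, rfl⟩)
      · rw [singleton_inter_eq_empty.mpr hx]; exact padic_empty_mem p
    · rw [empty_inter]; exact padic_empty_mem p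
  · -- t is a singleton
    rcases hs with ⟨n, a, ha, hga, rfl⟩ | ⟨n, a, ha, rfl⟩ | rfl
    · by_cases hx : ((b : ℝ) / (p : ℝ) ^ m) ∈
          Ioo ((a : ℝ) / (p : ℝ) ^ n) (((a : ℝ) + 1) / (p : ℝ) ^ n)
      · rw [inter_eq_right.mpr (singleton_subset_iff.mpr hx)]
        exact Or.inr (Or.inl ⟨m, b, hb, rfl⟩)
      · rw [inter_singleton_eq_empty.mpr hx]; exact padic_empty_mem p
    · by_cases hx : (a : ℝ) / (p : ℝ) ^ n = (b : ℝ) / (p : ℝ) ^ m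
      · rw [hx, inter_self]; exact Or.inr (Or.inl ⟨m, b, hb, rfl⟩)
      · rw [singleton_inter_eq_empty.mpr (by simpa using hx)]
        exact padic_empty_mem p
    · rw [empty_inter]; exact padic_empty_mem p
  · rw [inter_empty]; exact padic_empty_mem p
end

section
/- Let 𝒳 be a compact metric space with Borel probability measure m, let 𝒳₀ ⊆ 𝒳 be a closed set of measure zero whose complement U = 𝒳 \ 𝒳₀ is open, and let 𝒴 be a compact metric space with a continuous surjection ϖ: 𝒳 → 𝒴 whose restriction to U is a homeomorphism onto the complement of a closed measure-zero set 𝒴₀ ⊆ 𝒴, where the pushforward ϖ_*(m) is the measure m_𝒴 on 𝒴. If A ⊆ 𝒳 is a Borel set whose boundary has m-measure zero, then ϖ(A ∩ U) is a Borel set in 𝒴 whose boundary has m_𝒴-measure zero, and m_𝒴(ϖ(A ∩ U)) = m(A). -/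
open MeasureTheory

/-- Let `𝒳, 𝒴` be compact metric spaces with Borel probability measures, `𝒳₀ ⊆ 𝒳` and
`𝒴₀ ⊆ 𝒴` closed sets of measure zero, and `ϖ : 𝒳 → 𝒴` a continuous surjection with
`ϖ_* m = m_𝒴` whose restriction to `𝒳₀ᶜ` is a homeomorphism onto `𝒴₀ᶜ`. If `A ⊆ 𝒳` is
a Borel set whose boundary has `m`-measure zero, then `ϖ(A ∩ 𝒳₀ᶜ)` is a Borel set in
`𝒴` whose boundary has `m_𝒴`-measure zero, and `m_𝒴(ϖ(A ∩ 𝒳₀ᶜ)) = m(A)`. -/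
theorem continuitySet_image {X Y : Type*}
    [MetricSpace X] [CompactSpace X] [MeasurableSpace X] [BorelSpace X]
    [MetricSpace Y] [CompactSpace Y] [MeasurableSpace Y] [BorelSpace Y]
    (m : Measure X) [IsProbabilityMeasure m]
    (mY : Measure Y) [IsProbabilityMeasure mY]
    (X₀ : Set X) (Y₀ : Set Y)
    (hX₀closed : IsClosed X₀) (hX₀null : m X₀ = 0)
    (hY₀closed : IsClosed Y₀) (hY₀null : mY Y₀ = 0)
    (ϖ : X → Y) (hϖcont : Continuous ϖ) (hϖsurj : Function.Surjective ϖ)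
    (hpush : Measure.map ϖ m = mY)
    (hhomeo : ∃ e : (X₀ᶜ : Set X) ≃ₜ (Y₀ᶜ : Set Y),
      ∀ x : (X₀ᶜ : Set X), (e x : Y) = ϖ (x : X))
    (A : Set X) (hA : MeasurableSet A) (hAfrontier : m (frontier A) = 0) :
    MeasurableSet (ϖ '' (A ∩ X₀ᶜ)) ∧
    mY (frontier (ϖ '' (A ∩ X₀ᶜ))) = 0 ∧
    mY (ϖ '' (A ∩ X₀ᶜ)) = m A := by
  obtain ⟨e, he⟩ := hhomeo
  have hV : IsOpen (Y₀ᶜ) := hY₀closed.isOpen_compl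
  have hVmeas : MeasurableSet (Y₀ᶜ) := hV.measurableSet
  -- rewrite images through the homeomorphism
  have himg : ∀ B : Set X, ϖ '' (B ∩ X₀ᶜ)
      = Subtype.val '' (e '' ((Subtype.val ⁻¹' B : Set (X₀ᶜ : Set X)))) := by
    intro B
    ext y; constructor
    · rintro ⟨x, ⟨hxB, hxU⟩, rfl⟩
      exact ⟨e ⟨x, hxU⟩, ⟨⟨x, hxU⟩, hxB, rfl⟩, he ⟨x, hxU⟩⟩
    · rintro ⟨y', ⟨x, hxB, rfl⟩, rfl⟩
      exact ⟨x, ⟨hxB, x.2⟩, (he x).symm⟩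
  have hvalemb : MeasurableEmbedding (Subtype.val : (Y₀ᶜ : Set Y) → Y) :=
    MeasurableEmbedding.subtype_coe hVmeas
  have hmeasB : ∀ B : Set X, MeasurableSet B → MeasurableSet (ϖ '' (B ∩ X₀ᶜ)) := by
    intro B hB
    rw [himg]
    exact hvalemb.measurableSet_image.2
      (e.measurableEmbedding.measurableSet_image.2 (hB.preimage measurable_subtype_coe))
  have himgsub : ∀ B : Set X, ϖ '' (B ∩ X₀ᶜ) ⊆ Y₀ᶜ := by
    intro B
    rw [himg]
    rintro y ⟨y', _, rfl⟩; exact y'.2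
  -- preimage identity on X₀ᶜ
  have hpre : ∀ B : Set X, ϖ ⁻¹' (ϖ '' (B ∩ X₀ᶜ)) ∩ X₀ᶜ = B ∩ X₀ᶜ := by
    intro B
    ext x
    simp only [Set.mem_inter_iff, Set.mem_preimage, Set.mem_image]
    constructor
    · rintro ⟨⟨b, ⟨hbB, hbU⟩, hb⟩, hxU⟩
      have hval : (e ⟨b, hbU⟩ : Y) = (e ⟨x, hxU⟩ : Y) := by
        rw [he, he]; exact hb
      have hbx : (⟨b, hbU⟩ : (X₀ᶜ : Set X)) = ⟨x, hxU⟩ :=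
        e.injective (Subtype.val_injective hval)
      have : b = x := congrArg Subtype.val hbx
      exact ⟨this ▸ hbB, hxU⟩
    · rintro ⟨hxB, hxU⟩
      exact ⟨⟨x, ⟨hxB, hxU⟩, rfl⟩, hxU⟩
  have hmeasure : ∀ B : Set X, MeasurableSet B → mY (ϖ '' (B ∩ X₀ᶜ)) = m (B ∩ X₀ᶜ) := by
    intro B hB
    rw [← hpush, Measure.map_apply hϖcont.measurable (hmeasB B hB)]
    apply le_antisymm
    · calc m (ϖ ⁻¹' (ϖ '' (B ∩ X₀ᶜ))) ≤ m ((B ∩ X₀ᶜ) ∪ X₀) := by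
            apply measure_mono
            intro x hx
            by_cases h : x ∈ X₀
            · exact Or.inr h
            · exact Or.inl ((hpre B) ▸ (⟨hx, h⟩ : x ∈ ϖ ⁻¹' (ϖ '' (B ∩ X₀ᶜ)) ∩ X₀ᶜ))
        _ ≤ m (B ∩ X₀ᶜ) + m X₀ := measure_union_le _ _
        _ = m (B ∩ X₀ᶜ) := by rw [hX₀null, add_zero]
    · exact measure_mono (Set.subset_preimage_image ϖ _)
  -- frontier containment
  have hfr : frontier (ϖ '' (A ∩ X₀ᶜ)) ⊆ Y₀ ∪ ϖ '' (frontier A ∩ X₀ᶜ) := by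
    intro y hy
    by_cases hyY : y ∈ Y₀
    · exact Or.inl hyY
    right
    set S : Set Y := ϖ '' (A ∩ X₀ᶜ) with hS
    set y' : (Y₀ᶜ : Set Y) := ⟨y, hyY⟩ with hy'
    set x' : (X₀ᶜ : Set X) := e.symm y' with hx'
    have hϖx' : ϖ (x' : X) = y := by
      rw [← he x', hx', e.apply_symm_apply]
    -- S' as a subtype set
    set S' : Set (Y₀ᶜ : Set Y) := Subtype.val ⁻¹' S with hS'
    have hS'eq : S' = e '' (Subtype.val ⁻¹' A) := by
      rw [hS', hS, himg, Set.preimage_image_eq _ Subtype.val_injective]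
    -- y' in closure of S'
    have hyc : y' ∈ closure S' := by
      rw [closure_subtype]
      have h1 : (y : Y) ∈ closure (Y₀ᶜ ∩ S) :=
        hV.inter_closure ⟨hyY, hy.1⟩
      refine closure_mono ?_ h1
      intro z hz
      have : z ∈ Subtype.val '' S' := ⟨⟨z, hz.1⟩, hz.2, rfl⟩
      exact this
    have hxc : x' ∈ closure (Subtype.val ⁻¹' A : Set (X₀ᶜ : Set X)) := by
      have : e.symm y' ∈ e.symm '' closure S' := ⟨y', hyc, rfl⟩
      rw [e.symm.image_closure, hS'eq,
        show ⇑e.symm '' (⇑e '' (Subtype.val ⁻¹' A)) = Subtype.val ⁻¹' A from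
          e.toEquiv.symm_image_image _] at this
      exact this
    have hxcl : (x' : X) ∈ closure A := by
      rw [closure_subtype] at hxc
      exact closure_mono (Set.image_preimage_subset _ _) hxc
    have hxni : (x' : X) ∉ interior A := by
      intro hint
      -- build an open neighborhood of y inside S
      have hWopen : IsOpen (ϖ '' (interior A ∩ X₀ᶜ)) := by
        rw [himg]
        exact hV.isOpenEmbedding_subtypeVal.isOpenMap _
          (e.isOpenMap _ (isOpen_interior.preimage continuous_subtype_val))
      have hWsub : ϖ '' (interior A ∩ X₀ᶜ) ⊆ S :=
        Set.image_mono (Set.inter_subset_inter_left _ interior_subset)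
      have hyW : y ∈ ϖ '' (interior A ∩ X₀ᶜ) :=
        ⟨x', ⟨hint, x'.2⟩, hϖx'⟩
      exact hy.2 (interior_maximal hWsub hWopen hyW)
    exact ⟨x', ⟨⟨hxcl, hxni⟩, x'.2⟩, hϖx'⟩
  refine ⟨hmeasB A hA, ?_, ?_⟩
  · refine measure_mono_null hfr (measure_union_null hY₀null ?_)
    rw [hmeasure _ isClosed_frontier.measurableSet]
    exact measure_mono_null Set.inter_subset_left hAfrontier
  · rw [hmeasure A hA]
    apply le_antisymm (measure_mono Set.inter_subset_left)
    calc m A ≤ m ((A ∩ X₀ᶜ) ∪ X₀) := measure_mono (by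
          intro x hx
          by_cases h : x ∈ X₀
          · exact Or.inr h
          · exact Or.inl ⟨hx, h⟩)
      _ ≤ m (A ∩ X₀ᶜ) + m X₀ := measure_union_le _ _
      _ = m (A ∩ X₀ᶜ) := by rw [hX₀null, add_zero]
end
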